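/- In the commutative ring S = ℤ[a, λ]/⟨a⁴, λ⁶ + 4λ⁵a + 10λ⁴a² + 20λ³a³⟩, the coefficient of λ⁵a³ (with respect to the basis {λⁱaʲ : 0 ≤ i ≤ 5, 0 ≤ j ≤ 3}) in the element (λ + 2a)⁸ equals 92. -/

import Mathlib

open MvPolynomial Finset

noncomputable section

/-- The ideal ⟨a⁴, λ⁶ + 4λ⁵a + 10λ⁴a² + 20λ³a³⟩ in ℤ[a, λ], with `X 0 = a`, `X 1 = λ`. -/
def Icon : Ideal (MvPolynomial (Fin 2) ℤ) :=
  Ideal.span {(X 0 : MvPolynomial (Fin 2) ℤ) ^ 4,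
    (X 1) ^ 6 + 4 * (X 1) ^ 5 * X 0 + 10 * (X 1) ^ 4 * (X 0) ^ 2 + 20 * (X 1) ^ 3 * (X 0) ^ 3}

/-- The ring S = ℤ[a, λ]/⟨a⁴, λ⁶ + 4λ⁵a + 10λ⁴a² + 20λ³a³⟩. -/
def Sg := MvPolynomial (Fin 2) ℤ ⧸ Icon

instance : CommRing Sg := Ideal.Quotient.commRing Icon

def ag : Sg := Ideal.Quotient.mk Icon (X 0)
def lg : Sg := Ideal.Quotient.mk Icon (X 1)

/-!
Modulo `a⁴ = 0` every monomial of degree 8 in `λ, a` is an integer multiple of `λ⁵a³`: multiplying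
the relation for `λ⁶` by `a²`, `λa` and `λ²` gives successively `λ⁶a² = -4 λ⁵a³`, `λ⁷a = 6 λ⁵a³` and
`λ⁸ = -4 λ⁵a³`. Expanding `(λ + 2a)⁸` and dropping the terms divisible by `a⁴` then gives
`(-4 + 16·6 - 112·4 + 448) λ⁵a³ = 92 λ⁵a³`.
-/

namespace ConicRelations

variable {R : Type*} [CommRing R] {a l : R}

theorem pow_six_mul_sq_eq (ha : a ^ 4 = 0)
    (hl : l ^ 6 + 4 * l ^ 5 * a + 10 * l ^ 4 * a ^ 2 + 20 * l ^ 3 * a ^ 3 = 0) :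
    l ^ 6 * a ^ 2 = -4 * (l ^ 5 * a ^ 3) := by
  linear_combination a ^ 2 * hl - (10 * l ^ 4 + 20 * l ^ 3 * a) * ha

theorem pow_seven_mul_eq (ha : a ^ 4 = 0)
    (hl : l ^ 6 + 4 * l ^ 5 * a + 10 * l ^ 4 * a ^ 2 + 20 * l ^ 3 * a ^ 3 = 0) :
    l ^ 7 * a = 6 * (l ^ 5 * a ^ 3) := by
  linear_combination l * a * hl - 4 * pow_six_mul_sq_eq ha hl - 20 * l ^ 4 * ha

theorem pow_eight_eq (ha : a ^ 4 = 0)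
    (hl : l ^ 6 + 4 * l ^ 5 * a + 10 * l ^ 4 * a ^ 2 + 20 * l ^ 3 * a ^ 3 = 0) :
    l ^ 8 = -4 * (l ^ 5 * a ^ 3) := by
  linear_combination l ^ 2 * hl - 4 * pow_seven_mul_eq ha hl - 10 * pow_six_mul_sq_eq ha hl

theorem add_two_mul_pow_eight_eq (ha : a ^ 4 = 0)
    (hl : l ^ 6 + 4 * l ^ 5 * a + 10 * l ^ 4 * a ^ 2 + 20 * l ^ 3 * a ^ 3 = 0) :
    (l + 2 * a) ^ 8 = 92 * (l ^ 5 * a ^ 3) := by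
  have expand : (l + 2 * a) ^ 8 = l ^ 8 + 16 * (l ^ 7 * a) + 112 * (l ^ 6 * a ^ 2)
      + 448 * (l ^ 5 * a ^ 3) := by
    linear_combination
      (1120 * l ^ 4 + 1792 * l ^ 3 * a + 1792 * l ^ 2 * a ^ 2 + 1024 * l * a ^ 3 + 256 * a ^ 4) * ha
  rw [expand, pow_eight_eq ha hl, pow_seven_mul_eq ha hl, pow_six_mul_sq_eq ha hl]
  ring

end ConicRelations

theorem ag_pow_four : ag ^ 4 = 0 :=
  Ideal.Quotient.eq_zero_iff_mem.mpr (Ideal.subset_span (Set.mem_insert _ _))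

theorem lg_pow_six_add_eq_zero : lg ^ 6 + 4 * lg ^ 5 * ag + 10 * lg ^ 4 * ag ^ 2 + 20 * lg ^ 3 * ag ^ 3 = 0 :=
  Ideal.Quotient.eq_zero_iff_mem.mpr (Ideal.subset_span (Set.mem_insert_of_mem _ rfl))

/-- The coefficient of λ⁵a³ (w.r.t. the basis {λⁱaʲ : 0 ≤ i ≤ 5, 0 ≤ j ≤ 3}) in (λ + 2a)⁸
equals 92. -/
theorem stmt4 : ∃ c : Fin 6 → Fin 4 → ℤ,
    (lg + 2 * ag) ^ 8 =
      (∑ i : Fin 6, ∑ j : Fin 4, c i j • (lg ^ (i : ℕ) * ag ^ (j : ℕ))) ∧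
    c 5 3 = 92 := by
  refine ⟨fun i j => if i = 5 ∧ j = 3 then 92 else 0, ?_, rfl⟩
  rw [ConicRelations.add_two_mul_pow_eight_eq ag_pow_four lg_pow_six_add_eq_zero]
  simp [ite_and, ite_smul, Finset.sum_ite_eq']

end
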